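/- Fix d with 0 < d < 1. For σ² > 1/2 set ρ = 1 − 1/(2σ²), and define R(σ², d) as the infimum of (1/2) · log( (1 − ρ²)/(αβ) + 1/α + 1/β + 1 ) over all pairs (α, β) of positive reals satisfying 1 − (1/σ²) · (2(1 + ρ) + α + β) / (4(1 + α)(1 + β) − 4ρ²) ≤ d. Then R(σ², d) → ∞ as σ² → ∞. -/

import Mathlib

open Filter

/-- The Berger-Tung sum rate `I(x; u)` of the separation-based scheme with Gaussian test
channels of noise variances `α σ²` and `β σ²` (natural logarithm). -/
noncomputable def sumRate (α β ρ : ℝ) : ℝ :=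
  (1 / 2) * Real.log ((1 - ρ ^ 2) / (α * β) + 1 / α + 1 / β + 1)

/-- The resulting quadratic distortion `E[(x₃ − E[x₃|u₁,u₂])²]` for `x₃ = x₁ − x₂`. -/
noncomputable def distortionOf (s α β ρ : ℝ) : ℝ :=
  1 - (1 / s) * ((2 * (1 + ρ) + α + β) / (4 * (1 + α) * (1 + β) - 4 * ρ ^ 2))

/-- `R(σ², d)`: the infimum of the sum rate over all positive noise-variance ratios
`(α, β)` meeting the distortion constraint `d`, with `ρ = 1 − 1/(2σ²)`. -/
noncomputable def minSumRate (d s : ℝ) : ℝ :=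
  sInf { r : ℝ | ∃ α β : ℝ, 0 < α ∧ 0 < β ∧
    distortionOf s α β (1 - 1 / (2 * s)) ≤ d ∧ r = sumRate α β (1 - 1 / (2 * s)) }


/-!
Write `c = 4(1 - d)σ²`. Since `ρ ≤ 1`, the distortion constraint forces `(c - 1)(α + β) ≤ 4`,
so `1/α + 1/β ≥ 4/(α + β) ≥ c - 1` and every admissible sum rate is at least `(1/2) log c`.
The bound passes to the infimum because the admissible set is nonempty: for
`ρ = 1 - 1/(2σ²)` the distortion vanishes at `α = β = 0`, so it is below `d` for small `α = β > 0`.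
-/

open Real

lemma abs_one_sub_one_div_two_mul_lt_one {s : ℝ} (hs : 1 / 4 < s) : |1 - 1 / (2 * s)| < 1 := by
  have hpos : 0 < 1 / (2 * s) := by positivity
  have hlt : 1 / (2 * s) < 2 := by rw [div_lt_iff₀ (by positivity)]; linarith
  rw [abs_lt]
  constructor <;> linarith

lemma distortionOf_zero_zero {s : ℝ} (hs : 1 / 4 < s) :
    distortionOf s 0 0 (1 - 1 / (2 * s)) = 0 := by
  have hs0 : s ≠ 0 := by positivity
  have hρ : 2 * (1 + (1 - 1 / (2 * s))) ≠ 0 := by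
    linarith [(abs_lt.1 (abs_one_sub_one_div_two_mul_lt_one hs)).1]
  have hden : 4 - 4 * (1 - 1 / (2 * s)) ^ 2 = 2 * (1 + (1 - 1 / (2 * s))) / s := by
    field_simp
    ring
  simp only [distortionOf, add_zero, mul_one]
  rw [hden, div_div_eq_mul_div, mul_div_right_comm, div_self hρ, one_mul,
    one_div_mul_cancel hs0, sub_self]

lemma exists_distortionOf_le {d s : ℝ} (hd : 0 < d) (hs : 1 / 4 < s) :
    ∃ α β : ℝ, 0 < α ∧ 0 < β ∧ distortionOf s α β (1 - 1 / (2 * s)) ≤ d := by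
  set ρ := 1 - 1 / (2 * s)
  have hρ : ρ ^ 2 < 1 := (sq_lt_one_iff_abs_lt_one ρ).2 (abs_one_sub_one_div_two_mul_lt_one hs)
  have hcont : ContinuousAt (fun t : ℝ => distortionOf s t t ρ) 0 := by
    unfold distortionOf
    fun_prop (disch := linarith)
  have hsmall : ∀ᶠ t in nhdsWithin 0 (Set.Ioi 0), 0 < t ∧ distortionOf s t t ρ < d := by
    refine eventually_mem_nhdsWithin.and
      ((hcont.tendsto.mono_left nhdsWithin_le_nhds).eventually (gt_mem_nhds ?_))
    rwa [distortionOf_zero_zero hs]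
  obtain ⟨t, ht, hdt⟩ := hsmall.exists
  exact ⟨t, t, ht, ht, hdt.le⟩

lemma half_log_le_sumRate_of_distortionOf_le {s α β ρ d : ℝ} (hs : 0 < s) (hα : 0 < α)
    (hβ : 0 < β) (hρ : ρ ^ 2 ≤ 1) (hd : d < 1) (h : distortionOf s α β ρ ≤ d) :
    (1 / 2) * log (4 * (1 - d) * s) ≤ sumRate α β ρ := by
  set D := 4 * (1 + α) * (1 + β) - 4 * ρ ^ 2
  set N := 2 * (1 + ρ) + α + β
  have hD : 4 * (α + β) ≤ D := by nlinarith [mul_pos hα hβ]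
  have hN : N ≤ 4 + (α + β) := by nlinarith
  have hND : (1 - d) * s * D ≤ N := by
    have : 1 - d ≤ 1 / s * (N / D) := by unfold distortionOf at h; linarith
    rwa [one_div_mul_eq_div, le_div_iff₀ hs, le_div_iff₀ (by linarith)] at this
  have hsum : 4 * (1 - d) * s * (α + β) ≤ 4 + (α + β) := by
    nlinarith [mul_le_mul_of_nonneg_left hD (by nlinarith : 0 ≤ (1 - d) * s)]
  have hharm : 4 / (α + β) ≤ 1 / α + 1 / β := by
    rw [div_add_div _ _ hα.ne' hβ.ne', div_le_div_iff₀ (by positivity) (by positivity)]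
    nlinarith [sq_nonneg (α - β)]
  have harg : 4 * (1 - d) * s ≤ (1 - ρ ^ 2) / (α * β) + 1 / α + 1 / β + 1 := by
    have : 4 * (1 - d) * s ≤ 4 / (α + β) + 1 := by
      rw [div_add_one (by positivity), le_div_iff₀ (by positivity)]
      linarith
    have : 0 ≤ (1 - ρ ^ 2) / (α * β) := div_nonneg (by linarith) (by positivity)
    linarith
  exact mul_le_mul_of_nonneg_left (log_le_log (by nlinarith) harg) (by norm_num)

lemma half_log_le_minSumRate {d s : ℝ} (hd0 : 0 < d) (hd1 : d < 1) (hs : 1 / 4 < s) :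
    (1 / 2) * log (4 * (1 - d) * s) ≤ minSumRate d s := by
  have hρ : (1 - 1 / (2 * s)) ^ 2 ≤ 1 :=
    ((sq_lt_one_iff_abs_lt_one _).2 (abs_one_sub_one_div_two_mul_lt_one hs)).le
  obtain ⟨α, β, hα, hβ, hdist⟩ := exists_distortionOf_le hd0 hs
  refine le_csInf ⟨_, α, β, hα, hβ, hdist, rfl⟩ ?_
  rintro r ⟨α, β, hα, hβ, hdist, rfl⟩
  exact half_log_le_sumRate_of_distortionOf_le (by linarith) hα hβ hρ hd1 hdist

/-- Fix `0 < d < 1`.  Then `R(σ², d) → ∞` as `σ² → ∞`:  the sum rate of the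
separation-based scheme is unbounded in the regime where `ρ = 1 − 1/(2σ²)` and `σ² → ∞`. -/
theorem minSumRate_tendsto_atTop (d : ℝ) (hd0 : 0 < d) (hd1 : d < 1) :
    Tendsto (fun s : ℝ => minSumRate d s) atTop atTop := by
  have hlog : Tendsto (fun s : ℝ => (1 / 2) * log (4 * (1 - d) * s)) atTop atTop :=
    (tendsto_log_atTop.comp (tendsto_id.const_mul_atTop (by linarith))).const_mul_atTop
      (by norm_num)
  exact tendsto_atTop_mono' _
    ((eventually_gt_atTop (1 / 4)).mono fun s hs => half_log_le_minSumRate hd0 hd1 hs) hlog
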